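/- Let K ≥ 1, let f : ℝ^d → ℝ^C and h : ℝ^C → ℝ be K-times continuously differentiable, let (x_1,y_1),…,(x_n,y_n) ∈ ℝ^d × ℝ^C, and let α, β > 0. Then there exist functions ψ_{i,x'} : (0,1] → ℝ^C and ψ̂_{i,x'} : (0,1] → ℝ, indexed by i ∈ {1,…,n} and x' ∈ {x_1,…,x_n}, each tending to 0 as its argument tends to 0, such that the Mixup loss L^mix_n = (1/n²) Σ_{i,j=1}^n E_{λ∼Beta(α,β)} ℓ(λx_i+(1−λ)x_j, λy_i+(1−λ)y_j) satisfies L^mix_n = (1/n) Σ_{i=1}^n ℓ(x_i,y_i) + (1/n) Σ_{i=1}^n E_{λ∼D_λ} E_{x'∼D_X} [ Σ_{k=1}^K (a_λ^k / k!) D^k h(f(x_i))[Δ_i, …, Δ_i] − a_λ · y_iᵀ Δ_i + a_λ^K ψ̂_{i,x'}(a_λ) ], where a_λ = 1−λ and Δ_i = Σ_{k=1}^K (a_λ^{k−1} / k!) D^k f(x_i)[(x'−x_i), …, (x'−x_i)] + a_λ^{K−1} ψ_{i,x'}(a_λ). -/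

import Mathlib

/-!
Write `ℓᵢ(z) = h (f z) - ⟪yᵢ, f z⟫` and `zᵢⱼ(λ) = λ xᵢ + (1 - λ) xⱼ`. Since the label is mixed
linearly, the Mixup integrand of the pair `(i, j)` is `λ ℓᵢ(zᵢⱼ(λ)) + (1 - λ) ℓⱼ(zⱼᵢ(1 - λ))`. The
measures `λ · Beta(α, β)` and the reflection of `(1 - λ) · Beta(α, β)` are exactly the two
weighted components of `D_λ`, so after exchanging `i` and `j` in the second half the Mixup loss is
`n⁻² ∑ᵢⱼ E_{λ∼D_λ} ℓᵢ(zᵢⱼ(λ))`. With `a = 1 - λ` one has `zᵢⱼ = xᵢ + a (xⱼ - xᵢ)`; Taylor's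
formula for `f` at `xᵢ` gives `f(zᵢⱼ) - f(xᵢ) = a Δᵢ`, where `ψ` is the Peano remainder divided by
`a^K`, and Taylor's formula for `h` at `f(xᵢ)` with increment `a Δᵢ` expands `ℓᵢ(zᵢⱼ) - ℓᵢ(xᵢ)`,
`ψ̂` being again the rescaled remainder. Both increments are `O(a)`, so both rescaled remainders
tend to `0`.
-/

open MeasureTheory
open scoped BigOperators

/-- The Beta function B(a,b) = Γ(a)Γ(b)/Γ(a+b). -/
noncomputable def betaFun (a b : ℝ) : ℝ := Real.Gamma a * Real.Gamma b / Real.Gamma (a + b)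

/-- The Beta(a,b) density l ↦ l^(a−1) (1−l)^(b−1) / B(a,b). -/
noncomputable def betaDensity (a b l : ℝ) : ℝ :=
  l ^ (a - 1) * (1 - l) ^ (b - 1) / betaFun a b

/-- The Beta(a,b) probability measure on [0,1]. -/
noncomputable def betaMeasure (a b : ℝ) : Measure ℝ :=
  (volume.restrict (Set.Icc (0 : ℝ) 1)).withDensity fun l => ENNReal.ofReal (betaDensity a b l)

/-- The mixture D_λ = (a/(a+b))·Beta(a+1,b) + (b/(a+b))·Beta(b+1,a). -/
noncomputable def mixMeasure (a b : ℝ) : Measure ℝ :=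
  ENNReal.ofReal (a / (a + b)) • betaMeasure (a + 1) b
    + ENNReal.ofReal (b / (a + b)) • betaMeasure (b + 1) a

open scoped RealInnerProductSpace

/-- Δᵢ = Σ_{k=1}^K (a^{k−1}/k!) D^k f(xᵢ)[(x'−xᵢ),…,(x'−xᵢ)] + a^{K−1} ψ(a). -/
noncomputable def deltaFun {d C : ℕ} (K : ℕ)
    (f : EuclideanSpace ℝ (Fin d) → EuclideanSpace ℝ (Fin C))
    (x x' : EuclideanSpace ℝ (Fin d)) (ψ : ℝ → EuclideanSpace ℝ (Fin C)) (a : ℝ) :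
    EuclideanSpace ℝ (Fin C) :=
  (∑ k ∈ Finset.Icc 1 K,
      (a ^ (k - 1) / (Nat.factorial k : ℝ)) • iteratedFDeriv ℝ k f x (fun _ => x' - x))
    + a ^ (K - 1) • ψ a

open Asymptotics Filter Topology
open scoped Nat

section Taylor

variable {E F : Type*} [NormedAddCommGroup E] [NormedSpace ℝ E]
  [NormedAddCommGroup F] [NormedSpace ℝ F]

noncomputable def taylorRemainder (f : E → F) (K : ℕ) (x u : E) : F :=
  f (x + u) - ∑ k ∈ Finset.range (K + 1), (k ! : ℝ)⁻¹ • iteratedFDeriv ℝ k f x (fun _ => u)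

lemma sum_range_smul_iteratedFDeriv_smul (f : E → F) (K : ℕ) (x v : E) (a : ℝ) :
    ∑ k ∈ Finset.range (K + 1), (k ! : ℝ)⁻¹ • iteratedFDeriv ℝ k f x (fun _ => a • v)
      = f x + ∑ k ∈ Finset.Icc 1 K, (a ^ k / k !) • iteratedFDeriv ℝ k f x (fun _ => v) := by
  rw [Finset.range_eq_Ico, Finset.sum_eq_sum_Ico_succ_bot (Nat.succ_pos K)]
  congr 1
  · simp
  · refine Finset.sum_congr rfl fun k _ => ?_
    rw [(iteratedFDeriv ℝ k f x).map_smul_univ (fun _ => a) (fun _ => v), smul_smul]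
    simp [div_eq_inv_mul]

lemma taylorRemainder_smul (f : E → F) (K : ℕ) (x v : E) (a : ℝ) :
    taylorRemainder f K x (a • v) = f (x + a • v) - f x
      - ∑ k ∈ Finset.Icc 1 K, (a ^ k / k !) • iteratedFDeriv ℝ k f x (fun _ => v) := by
  rw [taylorRemainder, sum_range_smul_iteratedFDeriv_smul, sub_add_eq_sub_sub]

lemma taylorRemainder_zero_right (f : E → F) (K : ℕ) (x : E) : taylorRemainder f K x 0 = 0 := by
  rw [← zero_smul ℝ (0 : E), taylorRemainder_smul, smul_zero, add_zero, sub_self, zero_sub,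
    neg_eq_zero]
  refine Finset.sum_eq_zero fun k hk => ?_
  rw [zero_pow (by grind), zero_div, zero_smul]

lemma taylorRemainder_succ_eq_integral [CompleteSpace F] {f : E → F} {n : ℕ}
    (hf : ContDiff ℝ (n + 1) f) (x u : E) :
    taylorRemainder f (n + 1) x u = (n ! : ℝ)⁻¹ • ∫ t in (0 : ℝ)..1,
      (1 - t) ^ n • (iteratedFDeriv ℝ (n + 1) f (x + t • u) - iteratedFDeriv ℝ (n + 1) f x)
        (fun _ => u) := by
  have hA : Continuous fun w => iteratedFDeriv ℝ (n + 1) f w :=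
    hf.continuous_iteratedFDeriv (by norm_cast)
  have hconst : ∫ t in (0 : ℝ)..1, (1 - t) ^ n • iteratedFDeriv ℝ (n + 1) f x (fun _ => u)
      = ((n : ℝ) + 1)⁻¹ • iteratedFDeriv ℝ (n + 1) f x (fun _ => u) := by
    simp [intervalIntegral.integral_smul_const,
      intervalIntegral.integral_comp_sub_left (fun t : ℝ => t ^ n)]
  have hfact : (((n + 1) ! : ℕ) : ℝ)⁻¹ = (n ! : ℝ)⁻¹ * ((n : ℝ) + 1)⁻¹ := by
    rw [Nat.factorial_succ, Nat.cast_mul, mul_inv, mul_comm]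
    push_cast
    rfl
  simp only [sub_apply, smul_sub]
  rw [intervalIntegral.integral_sub (by apply Continuous.intervalIntegrable; fun_prop)
      (by apply Continuous.intervalIntegrable; fun_prop), hconst, taylorRemainder,
    map_add_eq_sum_add_integral_iteratedFDeriv fun t _ => hf.contDiffAt,
    Finset.sum_range_succ _ (n + 1), hfact, smul_sub, smul_smul]
  abel

lemma norm_taylorRemainder_succ_le [CompleteSpace F] {f : E → F} {n : ℕ}
    (hf : ContDiff ℝ (n + 1) f) (x u : E) {c : ℝ}
    (hc : ∀ t ∈ Set.Icc (0 : ℝ) 1,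
      ‖iteratedFDeriv ℝ (n + 1) f (x + t • u) - iteratedFDeriv ℝ (n + 1) f x‖ ≤ c) :
    ‖taylorRemainder f (n + 1) x u‖ ≤ c * ‖u‖ ^ (n + 1) := by
  have hm : ‖fun _ : Fin (n + 1) => u‖ ≤ ‖u‖ :=
    (pi_norm_le_iff_of_nonneg (norm_nonneg u)).2 fun _ => le_rfl
  have hbound : ∀ t ∈ Set.uIoc (0 : ℝ) 1, ‖(1 - t) ^ n • (iteratedFDeriv ℝ (n + 1) f (x + t • u)
      - iteratedFDeriv ℝ (n + 1) f x) (fun _ => u)‖ ≤ c * ‖u‖ ^ (n + 1) := by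
    rw [Set.uIoc_of_le zero_le_one]
    rintro t ⟨ht0, ht1⟩
    have hc0 : 0 ≤ c := (norm_nonneg _).trans (hc t ⟨ht0.le, ht1⟩)
    rw [norm_smul, Real.norm_of_nonneg (pow_nonneg (sub_nonneg.2 ht1) n), ← one_mul (c * _)]
    gcongr
    · exact pow_le_one₀ (sub_nonneg.2 ht1) (by linarith)
    · refine (ContinuousMultilinearMap.le_opNorm_mul_pow_card_of_le _ hm).trans ?_
      rw [Fintype.card_fin]
      gcongr
      exact hc t ⟨ht0.le, ht1⟩
  have hfact : ‖(n ! : ℝ)⁻¹‖ ≤ 1 := by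
    rw [norm_inv, Real.norm_natCast]
    exact inv_le_one_of_one_le₀ (by exact_mod_cast n.factorial_pos)
  rw [taylorRemainder_succ_eq_integral hf, norm_smul]
  calc ‖(n ! : ℝ)⁻¹‖ * ‖∫ t in (0 : ℝ)..1, (1 - t) ^ n • (iteratedFDeriv ℝ (n + 1) f (x + t • u)
        - iteratedFDeriv ℝ (n + 1) f x) (fun _ => u)‖
      ≤ 1 * (c * ‖u‖ ^ (n + 1) * |1 - 0|) := by
        gcongr
        exact intervalIntegral.norm_integral_le_of_norm_le_const hbound
    _ = c * ‖u‖ ^ (n + 1) := by simp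

theorem taylorRemainder_isLittleO [CompleteSpace F] {f : E → F} {K : ℕ} (hf : ContDiff ℝ K f)
    (x : E) : taylorRemainder f K x =o[𝓝 0] fun u => ‖u‖ ^ K := by
  cases K with
  | zero =>
    have hR : taylorRemainder f 0 x = fun u => f (x + u) - f x := by
      ext u
      simp [taylorRemainder]
    have hcont := ((hf.continuous.comp (continuous_const_add x)).tendsto 0).sub_const (f x)
    simp only [pow_zero]
    rw [hR, isLittleO_one_iff]
    simpa using hcont
  | succ n =>
    refine isLittleO_iff.2 fun c hc => ?_
    obtain ⟨δ, hδ, hA⟩ := Metric.continuousAt_iff.1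
      ((hf.continuous_iteratedFDeriv le_rfl).continuousAt (x := x)) c hc
    filter_upwards [Metric.ball_mem_nhds 0 hδ] with u hu
    rw [mem_ball_zero_iff] at hu
    rw [norm_pow, norm_norm]
    refine norm_taylorRemainder_succ_le hf x u fun t ht => ?_
    rw [← dist_eq_norm]
    refine (hA ?_).le
    rw [dist_eq_norm, add_sub_cancel_left, norm_smul, Real.norm_of_nonneg ht.1]
    exact (mul_le_of_le_one_left (norm_nonneg u) ht.2).trans_lt hu

noncomputable def scaledRemainder (f : E → F) (K : ℕ) (x v : E) (a : ℝ) : F :=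
  (a ^ K)⁻¹ • taylorRemainder f K x (a • v)

-- Also at `a = 0`, where both sides vanish, so the definition needs no case split.
lemma pow_smul_scaledRemainder (f : E → F) (K : ℕ) (x v : E) (a : ℝ) :
    a ^ K • scaledRemainder f K x v a = taylorRemainder f K x (a • v) := by
  rcases eq_or_ne a 0 with rfl | ha
  · simp [scaledRemainder, taylorRemainder_zero_right]
  · rw [scaledRemainder, smul_smul, mul_inv_cancel₀ (pow_ne_zero K ha), one_smul]

lemma tendsto_scaledRemainder [CompleteSpace F] {f : E → F} {K : ℕ} (hf : ContDiff ℝ K f)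
    (x : E) {w : ℝ → E} (hw : (fun a => a • w a) =O[𝓝 0] id) :
    Tendsto (fun a => scaledRemainder f K x (w a) a) (𝓝 0) (𝓝 0) := by
  have hR : (fun a => taylorRemainder f K x (a • w a)) =o[𝓝 0] (· ^ K) :=
    ((taylorRemainder_isLittleO hf x).comp_tendsto (hw.trans_tendsto tendsto_id)).trans_isBigO
      (hw.norm_left.pow K)
  rw [tendsto_zero_iff_norm_tendsto_zero]
  convert hR.norm_left.tendsto_div_nhds_zero.norm using 2 with a
  · simp [scaledRemainder, norm_smul, div_eq_inv_mul]
  · exact norm_zero.symm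

lemma DifferentiableAt.isBigO_comp_add_smul_sub {f : E → F} {x : E}
    (hf : DifferentiableAt ℝ f x) (v : E) : (fun a : ℝ => f (x + a • v) - f x) =O[𝓝 0] id := by
  have hg : DifferentiableAt ℝ (fun a : ℝ => f (x + a • v)) 0 := by
    apply DifferentiableAt.comp
    · simpa using hf
    · fun_prop
  have := hg.hasDerivAt.isBigO_sub
  simp only [zero_smul, add_zero, sub_zero] at this
  exact this

end Taylor

section Beta

lemma betaMeasure_eq_probabilityTheory_betaMeasure (a b : ℝ) :
    betaMeasure a b = ProbabilityTheory.betaMeasure a b := by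
  have hpdf : ProbabilityTheory.betaPDF a b
      = (Set.Ioo 0 1).indicator fun l => ENNReal.ofReal (betaDensity a b l) := by
    ext l
    simp only [ProbabilityTheory.betaPDF, ProbabilityTheory.betaPDFReal, Set.indicator,
      Set.mem_Ioo, betaDensity, betaFun, ProbabilityTheory.beta]
    split_ifs
    · ring_nf
    · exact ENNReal.ofReal_zero
  rw [ProbabilityTheory.betaMeasure, hpdf, withDensity_indicator measurableSet_Ioo,
    Measure.restrict_congr_set Ioo_ae_eq_Icc, betaMeasure]

variable {a b : ℝ}

lemma isProbabilityMeasure_betaMeasure (ha : 0 < a) (hb : 0 < b) :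
    IsProbabilityMeasure (betaMeasure a b) :=
  betaMeasure_eq_probabilityTheory_betaMeasure a b ▸
    ProbabilityTheory.isProbabilityMeasureBeta ha hb

lemma betaDensity_nonneg (ha : 0 < a) (hb : 0 < b) {l : ℝ} (hl : l ∈ Set.Icc (0 : ℝ) 1) :
    0 ≤ betaDensity a b l := by
  have := ProbabilityTheory.beta_pos ha hb
  have := Real.rpow_nonneg hl.1 (a - 1)
  have := Real.rpow_nonneg (sub_nonneg.2 hl.2) (b - 1)
  unfold betaDensity
  positivity

lemma integral_betaMeasure (ha : 0 < a) (hb : 0 < b) (G : ℝ → ℝ) :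
    ∫ l, G l ∂betaMeasure a b = ∫ l in Set.Icc (0 : ℝ) 1, betaDensity a b l * G l := by
  rw [betaMeasure, integral_withDensity_eq_integral_toReal_smul (by unfold betaDensity; fun_prop)
    (ae_of_all _ fun _ => ENNReal.ofReal_lt_top)]
  refine setIntegral_congr_fun measurableSet_Icc fun l hl => ?_
  rw [ENNReal.toReal_ofReal (betaDensity_nonneg ha hb hl), smul_eq_mul]

lemma integrable_betaMeasure (ha : 0 < a) (hb : 0 < b) {G : ℝ → ℝ} (hG : Continuous G) :
    Integrable G (betaMeasure a b) := by
  have := isProbabilityMeasure_betaMeasure ha hb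
  obtain ⟨M, hM⟩ := (isCompact_Icc (a := (0 : ℝ)) (b := 1)).exists_bound_of_continuousOn
    hG.continuousOn
  have hIcc : ∀ᵐ l ∂betaMeasure a b, l ∈ Set.Icc (0 : ℝ) 1 :=
    (withDensity_absolutelyContinuous _ _).ae_le (ae_restrict_mem measurableSet_Icc)
  exact .of_bound hG.aestronglyMeasurable M (hIcc.mono hM)

lemma integral_Icc_comp_one_sub (F : ℝ → ℝ) :
    ∫ l in Set.Icc (0 : ℝ) 1, F (1 - l) = ∫ l in Set.Icc (0 : ℝ) 1, F l := by
  simp only [integral_Icc_eq_integral_Ioc, ← intervalIntegral.integral_of_le zero_le_one,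
    intervalIntegral.integral_comp_sub_left F 1, sub_self, sub_zero]

lemma integral_betaMeasure_swap (ha : 0 < a) (hb : 0 < b) (G : ℝ → ℝ) :
    ∫ l, G l ∂betaMeasure b a = ∫ l, G (1 - l) ∂betaMeasure a b := by
  rw [integral_betaMeasure hb ha, integral_betaMeasure ha hb,
    ← integral_Icc_comp_one_sub fun l => betaDensity a b l * G (1 - l)]
  congr with l
  simp only [betaDensity, betaFun, sub_sub_cancel, add_comm b a]
  ring

lemma integral_betaMeasure_add_one (ha : 0 < a) (hb : 0 < b) (G : ℝ → ℝ) :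
    a / (a + b) * ∫ l, G l ∂betaMeasure (a + 1) b = ∫ l, l * G l ∂betaMeasure a b := by
  rw [integral_betaMeasure (by linarith) hb, integral_betaMeasure ha hb, ← integral_const_mul]
  refine setIntegral_congr_fun measurableSet_Icc fun l hl => ?_
  have hΓ := (Real.Gamma_pos_of_pos ha).ne'
  have hΓ' := (Real.Gamma_pos_of_pos (add_pos ha hb)).ne'
  simp only [betaDensity, betaFun, add_sub_cancel_right, add_right_comm a 1 b,
    Real.Gamma_add_one ha.ne', Real.Gamma_add_one (add_pos ha hb).ne']
  have hla : l ^ a = l ^ (a - 1) * l := by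
    rw [← Real.rpow_add_one' hl.1 (by linarith), sub_add_cancel]
  rw [hla]
  field_simp

end Beta

lemma average_sum_integral_eq_add_average_integral_sub {ι Ω : Type*} [Fintype ι]
    [MeasurableSpace Ω] (μ : Measure Ω) [IsProbabilityMeasure μ] (Q : ι → ι → Ω → ℝ)
    (hQ : ∀ i j, Integrable (Q i j) μ) (L : ι → ℝ) :
    (1 / (Fintype.card ι : ℝ) ^ 2) * ∑ i, ∑ j, ∫ ω, Q i j ω ∂μ
      = (1 / (Fintype.card ι : ℝ)) * ∑ i, L i
        + (1 / (Fintype.card ι : ℝ)) * ∑ i,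
            ∫ ω, (1 / (Fintype.card ι : ℝ)) * ∑ j, (Q i j ω - L i) ∂μ := by
  set N : ℝ := (Fintype.card ι : ℝ)
  have hmean : ∀ i, ∫ ω, (1 / N) * ∑ j, (Q i j ω - L i) ∂μ
      = (1 / N) * ∑ j, ∫ ω, Q i j ω ∂μ - (1 / N) * N * L i := by
    intro i
    rw [integral_const_mul, integral_finsetSum (f := fun j ω => Q i j ω - L i) _
      fun j _ => (hQ i j).sub (integrable_const _)]
    simp [integral_sub (hQ i _) (integrable_const _), Finset.sum_sub_distrib, N]
    ring
  have hN : (1 / N) * ((1 / N) * N) = 1 / N := by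
    rcases eq_or_ne N 0 with h | h
    · simp [h]
    · field_simp
  rw [Finset.sum_congr rfl fun i _ => hmean i, Finset.sum_sub_distrib, ← Finset.mul_sum,
    ← Finset.mul_sum]
  linear_combination (∑ i, L i) * hN

section Mix

variable {α β : ℝ}

lemma isProbabilityMeasure_mixMeasure (hα : 0 < α) (hβ : 0 < β) :
    IsProbabilityMeasure (mixMeasure α β) := by
  have := isProbabilityMeasure_betaMeasure (add_pos hα one_pos) hβ
  have := isProbabilityMeasure_betaMeasure (add_pos hβ one_pos) hα
  constructor
  rw [mixMeasure, Measure.add_apply, Measure.smul_apply, Measure.smul_apply, measure_univ,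
    measure_univ, smul_eq_mul, smul_eq_mul, mul_one, mul_one,
    ← ENNReal.ofReal_add (by positivity) (by positivity), ← add_div,
    div_self (add_pos hα hβ).ne', ENNReal.ofReal_one]

lemma integrable_mixMeasure (hα : 0 < α) (hβ : 0 < β) {G : ℝ → ℝ} (hG : Continuous G) :
    Integrable G (mixMeasure α β) :=
  .add_measure
    ((integrable_betaMeasure (add_pos hα one_pos) hβ hG).smul_measure ENNReal.ofReal_ne_top)
    ((integrable_betaMeasure (add_pos hβ one_pos) hα hG).smul_measure ENNReal.ofReal_ne_top)

lemma integral_mixMeasure (hα : 0 < α) (hβ : 0 < β) {G : ℝ → ℝ} (hG : Continuous G) :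
    ∫ l, G l ∂mixMeasure α β
      = ∫ l, l * G l ∂betaMeasure α β + ∫ l, (1 - l) * G (1 - l) ∂betaMeasure α β := by
  rw [mixMeasure, integral_add_measure
      ((integrable_betaMeasure (add_pos hα one_pos) hβ hG).smul_measure ENNReal.ofReal_ne_top)
      ((integrable_betaMeasure (add_pos hβ one_pos) hα hG).smul_measure ENNReal.ofReal_ne_top),
    integral_smul_measure, integral_smul_measure, ENNReal.toReal_ofReal (by positivity),
    ENNReal.toReal_ofReal (by positivity), smul_eq_mul, smul_eq_mul,
    integral_betaMeasure_add_one hα hβ, add_comm α β, integral_betaMeasure_add_one hβ hα,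
    integral_betaMeasure_swap hα hβ]

lemma sum_integral_mixup_eq (hα : 0 < α) (hβ : 0 < β) {ι : Type*} [Fintype ι]
    (q : ι → ι → ℝ → ℝ) (hq : ∀ i j, Continuous (q i j)) :
    ∑ i, ∑ j, ∫ l, (l * q i j l + (1 - l) * q j i (1 - l)) ∂betaMeasure α β
      = ∑ i, ∑ j, ∫ l, q i j l ∂mixMeasure α β := by
  have hsplit : ∀ i j, ∫ l, (l * q i j l + (1 - l) * q j i (1 - l)) ∂betaMeasure α β
      = ∫ l, l * q i j l ∂betaMeasure α β + ∫ l, (1 - l) * q j i (1 - l) ∂betaMeasure α β := by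
    intro i j
    have := hq i j
    have := hq j i
    exact integral_add (integrable_betaMeasure hα hβ (by fun_prop))
      (integrable_betaMeasure hα hβ (by fun_prop))
  simp only [integral_mixMeasure hα hβ (hq _ _), hsplit, Finset.sum_add_distrib]
  rw [Finset.sum_comm (f := fun i j => ∫ l, (1 - l) * q j i (1 - l) ∂betaMeasure α β)]

lemma mixup_decomposition (hα : 0 < α) (hβ : 0 < β) {ι : Type*} [Fintype ι]
    (q : ι → ι → ℝ → ℝ) (hq : ∀ i j, Continuous (q i j)) (L : ι → ℝ) :
    (1 / (Fintype.card ι : ℝ) ^ 2)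
        * ∑ i, ∑ j, ∫ l, (l * q i j l + (1 - l) * q j i (1 - l)) ∂betaMeasure α β
      = (1 / (Fintype.card ι : ℝ)) * ∑ i, L i
        + (1 / (Fintype.card ι : ℝ)) * ∑ i,
            ∫ l, (1 / (Fintype.card ι : ℝ)) * ∑ j, (q i j l - L i) ∂mixMeasure α β := by
  have := isProbabilityMeasure_mixMeasure hα hβ
  rw [sum_integral_mixup_eq hα hβ q hq]
  exact average_sum_integral_eq_add_average_integral_sub _ q
    (fun i j => integrable_mixMeasure hα hβ (hq i j)) L

end Mix

section Loss

variable {E F : Type*} [NormedAddCommGroup E] [NormedSpace ℝ E]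
  [NormedAddCommGroup F] [InnerProductSpace ℝ F]

noncomputable def loss (f : E → F) (h : F → ℝ) (x : E) (y : F) : ℝ := h (f x) - ⟪y, f x⟫

lemma mixup_loss_eq (f : E → F) (h : F → ℝ) (x x' : E) (y y' : F) (l : ℝ) :
    h (f (l • x + (1 - l) • x')) - ⟪l • y + (1 - l) • y', f (l • x + (1 - l) • x')⟫
      = l * loss f h (l • x + (1 - l) • x') y
        + (1 - l) * loss f h ((1 - l) • x' + (1 - (1 - l)) • x) y' := by
  rw [sub_sub_cancel, add_comm ((1 - l) • x')]
  simp only [loss, inner_add_left, real_inner_smul_left]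
  ring

lemma taylor_expansion_sub_inner (h : F → ℝ) (K : ℕ) (y p q Δ : F) {a : ℝ}
    (hΔ : a • Δ = q - p) :
    ∑ k ∈ Finset.Icc 1 K, (a ^ k / k !) * iteratedFDeriv ℝ k h p (fun _ => Δ) - a * ⟪y, Δ⟫
      + a ^ K * scaledRemainder h K p Δ a = (h q - ⟪y, q⟫) - (h p - ⟪y, p⟫) := by
  obtain rfl : q = p + a • Δ := by rw [hΔ, add_sub_cancel]
  have hR := pow_smul_scaledRemainder h K p Δ a
  rw [taylorRemainder_smul, smul_eq_mul] at hR
  simp only [hR, smul_eq_mul, inner_add_right, real_inner_smul_right]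
  ring

end Loss

section Mixup

variable {d C K : ℕ}

lemma smul_deltaFun (hK : 1 ≤ K)
    (f : EuclideanSpace ℝ (Fin d) → EuclideanSpace ℝ (Fin C)) (x x' : EuclideanSpace ℝ (Fin d))
    (a : ℝ) :
    a • deltaFun K f x x' (scaledRemainder f K x (x' - x)) a = f (x + a • (x' - x)) - f x := by
  have hterm : ∀ k ∈ Finset.Icc 1 K, a • ((a ^ (k - 1) / k !) • iteratedFDeriv ℝ k f x
      (fun _ => x' - x)) = (a ^ k / k !) • iteratedFDeriv ℝ k f x (fun _ => x' - x) := by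
    intro k hk
    rw [smul_smul, ← mul_div_assoc, ← pow_succ', Nat.sub_add_cancel (Finset.mem_Icc.1 hk).1]
  rw [deltaFun, smul_add, Finset.smul_sum, Finset.sum_congr rfl hterm, smul_smul, ← pow_succ',
    Nat.sub_add_cancel hK, pow_smul_scaledRemainder, taylorRemainder_smul]
  abel

lemma mixup_taylor_expansion (hK : 1 ≤ K)
    (f : EuclideanSpace ℝ (Fin d) → EuclideanSpace ℝ (Fin C)) (h : EuclideanSpace ℝ (Fin C) → ℝ)
    (x x' : EuclideanSpace ℝ (Fin d)) (y : EuclideanSpace ℝ (Fin C)) (l : ℝ) :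
    ∑ k ∈ Finset.Icc 1 K, ((1 - l) ^ k / k !) * iteratedFDeriv ℝ k h (f x)
        (fun _ => deltaFun K f x x' (scaledRemainder f K x (x' - x)) (1 - l))
      - (1 - l) * ⟪y, deltaFun K f x x' (scaledRemainder f K x (x' - x)) (1 - l)⟫
      + (1 - l) ^ K * scaledRemainder h K (f x)
          (deltaFun K f x x' (scaledRemainder f K x (x' - x)) (1 - l)) (1 - l)
      = loss f h (l • x + (1 - l) • x') y - loss f h x y := by
  have hpoint : x + (1 - l) • (x' - x) = l • x + (1 - l) • x' := by module
  exact taylor_expansion_sub_inner h K y (f x) _ _ (hpoint ▸ smul_deltaFun hK f x x' (1 - l))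

end Mixup

theorem mixup_implicit_regularization_general (d C K n : ℕ) (hK : 1 ≤ K)
    (f : EuclideanSpace ℝ (Fin d) → EuclideanSpace ℝ (Fin C))
    (h : EuclideanSpace ℝ (Fin C) → ℝ)
    (hf : ContDiff ℝ K f) (hh : ContDiff ℝ K h)
    (x : Fin n → EuclideanSpace ℝ (Fin d)) (y : Fin n → EuclideanSpace ℝ (Fin C))
    (α β : ℝ) (hα : 0 < α) (hβ : 0 < β) :
    ∃ (ψ : Fin n → Fin n → ℝ → EuclideanSpace ℝ (Fin C)) (ψh : Fin n → Fin n → ℝ → ℝ),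
      (∀ i j, Filter.Tendsto (ψ i j) (nhdsWithin 0 (Set.Ioc (0 : ℝ) 1)) (nhds 0)) ∧
      (∀ i j, Filter.Tendsto (ψh i j) (nhdsWithin 0 (Set.Ioc (0 : ℝ) 1)) (nhds 0)) ∧
      (1 / (n : ℝ) ^ 2) * ∑ i, ∑ j,
          ∫ l, (h (f (l • x i + (1 - l) • x j))
              - ⟪l • y i + (1 - l) • y j, f (l • x i + (1 - l) • x j)⟫) ∂betaMeasure α β
        = (1 / (n : ℝ)) * ∑ i, (h (f (x i)) - ⟪y i, f (x i)⟫)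
          + (1 / (n : ℝ)) * ∑ i,
              ∫ l, ((1 / (n : ℝ)) * ∑ j,
                  (∑ k ∈ Finset.Icc 1 K,
                      ((1 - l) ^ k / (Nat.factorial k : ℝ)) *
                        iteratedFDeriv ℝ k h (f (x i))
                          (fun _ => deltaFun K f (x i) (x j) (ψ i j) (1 - l))
                    - (1 - l) * ⟪y i, deltaFun K f (x i) (x j) (ψ i j) (1 - l)⟫
                    + (1 - l) ^ K * ψh i j (1 - l))) ∂mixMeasure α β := by
  refine ⟨fun i j => scaledRemainder f K (x i) (x j - x i),
    fun i j a => scaledRemainder h K (f (x i))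
      (deltaFun K f (x i) (x j) (scaledRemainder f K (x i) (x j - x i)) a) a,
    fun i j => ?_, fun i j => ?_, ?_⟩
  · refine (tendsto_scaledRemainder hf (x i) ?_).mono_left nhdsWithin_le_nhds
    exact isBigO_of_le' _ fun a => (norm_smul a _).trans_le (mul_comm _ _).le
  · refine (tendsto_scaledRemainder hh (f (x i)) ?_).mono_left nhdsWithin_le_nhds
    simp only [smul_deltaFun hK]
    exact (hf.differentiable (by simp; omega) _).isBigO_comp_add_smul_sub _
  have hq : ∀ i j, Continuous fun l : ℝ => loss f h (l • x i + (1 - l) • x j) (y i) := by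
    have := hf.continuous
    have := hh.continuous
    intro i j
    unfold loss
    fun_prop
  simp only [mixup_loss_eq, mixup_taylor_expansion hK f h]
  simpa [loss] using mixup_decomposition hα hβ
    (fun i j l => loss f h (l • x i + (1 - l) • x j) (y i)) hq fun i => loss f h (x i) (y i)

/-- the implicit regularization of Mixup.  With ℓ(x,y) = h(f(x)) − yᵀ f(x),
f,h ∈ C^K (K ≥ 1), samples (xᵢ,yᵢ), and α,β > 0, there are remainder functions
ψ_{i,x'}, ψ̂_{i,x'} (indexed by i and x' = xⱼ), each tending to 0 as a → 0⁺, such that the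
Mixup loss equals the standard empirical loss plus
(1/n) Σᵢ E_{λ∼D_λ} E_{x'∼D_X} [ Σ_{k=1}^K (a_λ^k/k!) D^k h(f(xᵢ))[Δᵢ,…,Δᵢ]
  − a_λ yᵢᵀ Δᵢ + a_λ^K ψ̂_{i,x'}(a_λ) ],  a_λ = 1−λ,
where the empirical expectation E_{x'∼D_X} is written as (1/n) Σⱼ. -/
theorem mixup_implicit_regularization (d C K n : ℕ) (hK : 1 ≤ K) (hn : 0 < n)
    (f : EuclideanSpace ℝ (Fin d) → EuclideanSpace ℝ (Fin C))
    (h : EuclideanSpace ℝ (Fin C) → ℝ)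
    (hf : ContDiff ℝ K f) (hh : ContDiff ℝ K h)
    (x : Fin n → EuclideanSpace ℝ (Fin d)) (y : Fin n → EuclideanSpace ℝ (Fin C))
    (α β : ℝ) (hα : 0 < α) (hβ : 0 < β) :
    ∃ (ψ : Fin n → Fin n → ℝ → EuclideanSpace ℝ (Fin C)) (ψh : Fin n → Fin n → ℝ → ℝ),
      (∀ i j, Filter.Tendsto (ψ i j) (nhdsWithin 0 (Set.Ioc (0 : ℝ) 1)) (nhds 0)) ∧
      (∀ i j, Filter.Tendsto (ψh i j) (nhdsWithin 0 (Set.Ioc (0 : ℝ) 1)) (nhds 0)) ∧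
      (1 / (n : ℝ) ^ 2) * ∑ i, ∑ j,
          ∫ l, (h (f (l • x i + (1 - l) • x j))
              - ⟪l • y i + (1 - l) • y j, f (l • x i + (1 - l) • x j)⟫) ∂betaMeasure α β
        = (1 / (n : ℝ)) * ∑ i, (h (f (x i)) - ⟪y i, f (x i)⟫)
          + (1 / (n : ℝ)) * ∑ i,
              ∫ l, ((1 / (n : ℝ)) * ∑ j,
                  (∑ k ∈ Finset.Icc 1 K,
                      ((1 - l) ^ k / (Nat.factorial k : ℝ)) *
                        iteratedFDeriv ℝ k h (f (x i))
                          (fun _ => deltaFun K f (x i) (x j) (ψ i j) (1 - l))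
                    - (1 - l) * ⟪y i, deltaFun K f (x i) (x j) (ψ i j) (1 - l)⟫
                    + (1 - l) ^ K * ψh i j (1 - l))) ∂mixMeasure α β :=
  mixup_implicit_regularization_general d C K n hK f h hf hh x y α β hα hβ
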